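/- arXiv:1206.3219 — 3 statements merged into one kernel-verified Lean document; each statement's English description precedes it below -/
import Mathlib

section
/- For every k ≥ 0 and all μ, ν ∈ M, the generalized Wasserstein distance satisfies W^{a,b}_p(kμ, kν) ≤ max{k^{1/p}, k} · W^{a,b}_p(μ, ν). -/
open MeasureTheory ENNReal Filter Topology

noncomputable section

/-- `ℝ^d` as a Euclidean space. -/
abbrev Euc (d : ℕ) := EuclideanSpace ℝ (Fin d)

variable {E : Type*} [NormedAddCommGroup E] [MeasurableSpace E]

/-- Total mass `|μ| = μ(ℝ^d)` of a nonnegative measure, as a real number. -/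
def mass (μ : Measure E) : ℝ := (μ Set.univ).toReal

/-- Total variation norm `|μ - ν|` of the difference of two nonnegative finite
measures, computed via the Jordan decomposition `(μ - ν) + (ν - μ)`. -/
def tvDist (μ ν : Measure E) : ℝ := ((μ - ν) Set.univ + (ν - μ) Set.univ).toReal

/-- `μ` has finite `p`-th moment. -/
def FinMom (p : ℝ) (μ : Measure E) : Prop :=
  ∫⁻ x, ENNReal.ofReal (‖x‖ ^ p) ∂μ < ⊤

/-- `π` is a transference plan from `μ` to `ν`: its first and second marginals
are `μ` and `ν` respectively. -/
def IsPlan (π : Measure (E × E)) (μ ν : Measure E) : Prop :=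
  π.map Prod.fst = μ ∧ π.map Prod.snd = ν

/-- Transportation cost `∫ |x - y|^p dπ(x,y)` of a plan `π`. -/
def Wcost (p : ℝ) (π : Measure (E × E)) : ℝ≥0∞ :=
  ∫⁻ z, ENNReal.ofReal (dist z.1 z.2 ^ p) ∂π

/-- The Wasserstein distance `W_p(μ,ν) = (inf_π ∫ |x-y|^p dπ)^{1/p}`. -/
def Wp (p : ℝ) (μ ν : Measure E) : ℝ :=
  ((sInf (Wcost p '' {π | IsPlan π μ ν})) ^ (1 / p)).toReal

/-- The set of admissible values `a|μ-μ̃| + a|ν-ν̃| + b W_p(μ̃,ν̃)` over all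
`μ̃, ν̃ ∈ M^p` with `|μ̃| = |ν̃|`. -/
def gwSet (a b p : ℝ) (μ ν : Measure E) : Set ℝ :=
  { r | ∃ μ' ν' : Measure E, IsFiniteMeasure μ' ∧ IsFiniteMeasure ν' ∧
      FinMom p μ' ∧ FinMom p ν' ∧ μ' Set.univ = ν' Set.univ ∧
      r = a * tvDist μ μ' + a * tvDist ν ν' + b * Wp p μ' ν' }

/-- The generalized Wasserstein distance `W^{a,b}_p`. -/
def GW (a b p : ℝ) (μ ν : Measure E) : ℝ := sInf (gwSet a b p μ ν)

/-- The support of a measure: the set of points all of whose open neighbourhoods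
have positive measure. -/
def msupp (μ : Measure E) : Set E := {x : E | ∀ U : Set E, IsOpen U → x ∈ U → μ U ≠ 0}

/-- Weak convergence of a sequence of measures: convergence of integrals of all
bounded continuous functions. -/
def WeakConv {F : Type*} [MeasurableSpace F] [TopologicalSpace F]
    (μs : ℕ → Measure F) (μ : Measure F) : Prop :=
  ∀ f : F → ℝ, Continuous f → (∃ C : ℝ, ∀ x, |f x| ≤ C) →
    Tendsto (fun n => ∫ x, f x ∂(μs n)) atTop (𝓝 (∫ x, f x ∂μ))

/-- A family of measures is tight if for every `ε > 0` there is a compact set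
whose complement has measure less than `ε` for all members of the family. -/
def Tight (F : Set (Measure E)) : Prop :=
  ∀ ε : ℝ, 0 < ε → ∃ K : Set E, IsCompact K ∧ ∀ μ ∈ F, μ Kᶜ < ENNReal.ofReal ε

end

/-!
Multiplying `μ`, `ν` and any admissible pair `μ̃`, `ν̃` by `k` multiplies both total-variation
terms by `k`. Plans between `kμ̃` and `kν̃` are exactly `k` times plans between `μ̃` and `ν̃`,
and the transport cost is linear in the plan, so `W_p(kμ̃, kν̃) = k^{1/p} W_p(μ̃, ν̃)`. Hence each
admissible value `r` for `(μ, ν)` gives an admissible value at most `max(k^{1/p}, k) r` for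
`(kμ, kν)`.
-/

open scoped NNReal

namespace MeasureTheory.Measure

variable {α : Type*} [MeasurableSpace α]

lemma smul_sub_le_sub_smul {k : ℝ≥0} (hk : k ≠ 0) (μ ν : Measure α) :
    k • (μ - ν) ≤ k • μ - k • ν := by
  refine le_sInf fun d (hd : k • μ ≤ d + k • ν) => ?_
  have hμ : μ ≤ k⁻¹ • d + ν := by
    simpa [smul_add, smul_smul, hk] using smul_le_smul_left k⁻¹ hd
  calc k • (μ - ν) ≤ k • (k⁻¹ • d) := smul_le_smul_left k (sub_le_of_le_add hμ)
    _ = d := by simp [smul_smul, hk]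

lemma nnreal_smul_sub (k : ℝ≥0) (μ ν : Measure α) : k • μ - k • ν = k • (μ - ν) := by
  rcases eq_or_ne k 0 with rfl | hk
  · simp
  refine le_antisymm ?_ (smul_sub_le_sub_smul hk μ ν)
  calc k • μ - k • ν = k • (k⁻¹ • (k • μ - k • ν)) := by simp [smul_smul, hk]
    _ ≤ k • (k⁻¹ • (k • μ) - k⁻¹ • (k • ν)) :=
        smul_le_smul_left k (smul_sub_le_sub_smul (inv_ne_zero hk) _ _)
    _ = k • (μ - ν) := by simp [smul_smul, hk]

end MeasureTheory.Measure

section GeneralizedWasserstein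

variable {E : Type*} [MeasurableSpace E]

lemma tvDist_nonneg (μ ν : Measure E) : 0 ≤ tvDist μ ν := ENNReal.toReal_nonneg

lemma tvDist_smul (k : ℝ≥0) (μ ν : Measure E) :
    tvDist (k • μ) (k • ν) = k * tvDist μ ν := by
  rw [tvDist, tvDist, Measure.nnreal_smul_sub, Measure.nnreal_smul_sub,
    Measure.coe_nnreal_smul_apply, Measure.coe_nnreal_smul_apply, ← mul_add, ENNReal.toReal_mul,
    ENNReal.coe_toReal]

lemma IsPlan.smul {π : Measure (E × E)} {μ ν : Measure E} (h : IsPlan π μ ν) (k : ℝ≥0) :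
    IsPlan (k • π) (k • μ) (k • ν) :=
  ⟨by rw [Measure.map_smul, h.1], by rw [Measure.map_smul, h.2]⟩

lemma setOf_isPlan_smul {k : ℝ≥0} (hk : k ≠ 0) (μ ν : Measure E) :
    {π | IsPlan π (k • μ) (k • ν)} = (k • ·) '' {π | IsPlan π μ ν} := by
  ext π
  refine ⟨fun h => ⟨k⁻¹ • π, ?_, by simp [smul_smul, hk]⟩, ?_⟩
  · simpa [smul_smul, hk] using h.smul k⁻¹
  · rintro ⟨π, hπ, rfl⟩
    exact hπ.smul k

variable [NormedAddCommGroup E]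

lemma FinMom.smul {p : ℝ} {μ : Measure E} (h : FinMom p μ) (k : ℝ≥0) : FinMom p (k • μ) := by
  rw [FinMom, lintegral_smul_measure, ENNReal.smul_def]
  exact ENNReal.mul_lt_top ENNReal.coe_lt_top h

lemma wcost_smul (p : ℝ) (k : ℝ≥0) (π : Measure (E × E)) :
    Wcost p (k • π) = k * Wcost p π := by
  rw [Wcost, Wcost, lintegral_smul_measure, ENNReal.smul_def, smul_eq_mul]

lemma sInf_wcost_smul (p : ℝ) (k : ℝ≥0) (μ ν : Measure E) :
    sInf (Wcost p '' {π | IsPlan π (k • μ) (k • ν)}) =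
      k * sInf (Wcost p '' {π | IsPlan π μ ν}) := by
  rcases eq_or_ne k 0 with rfl | hk
  · have hzero : Wcost p 0 ∈ Wcost p '' {π | IsPlan π ((0 : ℝ≥0) • μ) ((0 : ℝ≥0) • ν)} :=
      ⟨0, by simp [IsPlan], rfl⟩
    simpa [Wcost] using sInf_le hzero
  rw [setOf_isPlan_smul hk, Set.image_image]
  simp only [wcost_smul, sInf_image,
    ENNReal.mul_iInf_of_ne (ENNReal.coe_ne_zero.2 hk) ENNReal.coe_ne_top]

lemma wp_nonneg (p : ℝ) (μ ν : Measure E) : 0 ≤ Wp p μ ν := ENNReal.toReal_nonneg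

lemma wp_smul {p : ℝ} (hp : 0 ≤ p) (k : ℝ≥0) (μ ν : Measure E) :
    Wp p (k • μ) (k • ν) = (k : ℝ) ^ (1 / p) * Wp p μ ν := by
  have hp' : 0 ≤ 1 / p := one_div_nonneg.2 hp
  rw [Wp, Wp, sInf_wcost_smul, ENNReal.mul_rpow_of_nonneg _ _ hp', ENNReal.toReal_mul,
    ← ENNReal.coe_rpow_of_nonneg _ hp', ENNReal.coe_toReal, NNReal.coe_rpow]

lemma gwSet_bddBelow {a b p : ℝ} (ha : 0 ≤ a) (hb : 0 ≤ b) (μ ν : Measure E) :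
    BddBelow (gwSet a b p μ ν) := by
  refine ⟨0, ?_⟩
  rintro _ ⟨μ', ν', -, -, -, -, -, rfl⟩
  have := tvDist_nonneg μ μ'
  have := tvDist_nonneg ν ν'
  have := wp_nonneg p μ' ν'
  positivity

lemma gwSet_nonempty (a b p : ℝ) (μ ν : Measure E) : (gwSet a b p μ ν).Nonempty :=
  ⟨_, 0, 0, inferInstance, inferInstance, by simp [FinMom], by simp [FinMom], rfl, rfl⟩

lemma exists_mem_gwSet_smul_le {a b p r : ℝ} (ha : 0 ≤ a) (hb : 0 ≤ b) (hp : 0 ≤ p)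
    {μ ν : Measure E} (hr : r ∈ gwSet a b p μ ν) (k : ℝ≥0) :
    ∃ s ∈ gwSet a b p (k • μ) (k • ν), s ≤ max ((k : ℝ) ^ (1 / p)) k * r := by
  obtain ⟨μ', ν', hμ', hν', hmomμ, hmomν, hmass, rfl⟩ := hr
  refine ⟨_, ⟨k • μ', k • ν', inferInstance, inferInstance, hmomμ.smul k, hmomν.smul k,
    by simp [hmass], rfl⟩, ?_⟩
  rw [tvDist_smul, tvDist_smul, wp_smul hp]
  set c := max ((k : ℝ) ^ (1 / p)) k
  have := tvDist_nonneg μ μ'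
  have := tvDist_nonneg ν ν'
  have := wp_nonneg p μ' ν'
  have hkc : (k : ℝ) ≤ c := le_max_right _ _
  have hkpc : (k : ℝ) ^ (1 / p) ≤ c := le_max_left _ _
  calc _ ≤ a * (c * tvDist μ μ') + a * (c * tvDist ν ν') + b * (c * Wp p μ' ν') := by gcongr
    _ = c * _ := by ring

end GeneralizedWasserstein

theorem gw_smul_le_general {d : ℕ} (a b p : ℝ) (hp : 1 ≤ p) (ha : 0 < a) (hb : 0 < b)
    (μ ν : Measure (Euc d)) (k : NNReal) :
    GW a b p (k • μ) (k • ν) ≤ max ((k : ℝ) ^ (1 / p)) (k : ℝ) * GW a b p μ ν := by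
  have hc : 0 ≤ max ((k : ℝ) ^ (1 / p)) (k : ℝ) := le_max_of_le_right k.2
  rw [GW, GW, ← smul_eq_mul, ← Real.sInf_smul_of_nonneg hc]
  refine le_csInf ((gwSet_nonempty a b p μ ν).smul_set) ?_
  rintro _ ⟨r, hr, rfl⟩
  obtain ⟨s, hs, hsr⟩ := exists_mem_gwSet_smul_le ha.le hb.le (zero_le_one.trans hp) hr k
  exact (csInf_le (gwSet_bddBelow ha.le hb.le _ _) hs).trans hsr

theorem gw_smul_le {d : ℕ} (hd : 1 ≤ d) (a b p : ℝ) (hp : 1 ≤ p) (ha : 0 < a) (hb : 0 < b)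
    (μ ν : Measure (Euc d)) [IsFiniteMeasure μ] [IsFiniteMeasure ν] (k : NNReal) :
    GW a b p (k • μ) (k • ν) ≤ max ((k : ℝ) ^ (1 / p)) (k : ℝ) * GW a b p μ ν :=
  gw_smul_le_general a b p hp ha hb μ ν k
end

section
/- Let μ_n be a sequence in M and μ ∈ M. If μ_n converges weakly to μ (i.e. ∫ f dμ_n → ∫ f dμ for every bounded continuous f : ℝ^d → ℝ) and the family {μ_n} is tight, then W^{a,b}_p(μ_n, μ) → 0. -/
open MeasureTheory ENNReal Filter Topology

noncomputable section

/-- `μ ∈ M_0^{ac}`: a finite measure, absolutely continuous with respect to the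
Lebesgue measure, with bounded support. -/
def M0ac {d : ℕ} (μ : MeasureTheory.Measure (Euc d)) : Prop :=
  MeasureTheory.IsFiniteMeasure μ ∧ μ ≪ MeasureTheory.volume ∧ Bornology.IsBounded (msupp μ)

/-- `Φ` is the flow of the vector field `v`: `Φ 0 = id` and
`∂_t Φ_t(x) = v(Φ_t(x))`. -/
def IsFlow {d : ℕ} (v : Euc d → Euc d) (Φ : ℝ → Euc d → Euc d) : Prop :=
  (∀ x, Φ 0 x = x) ∧ ∀ x t, HasDerivAt (fun s => Φ s x) (v (Φ t x)) t

end


/-!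
Tightness of `{μₙ} ∪ {μ}` gives a compact set `K` outside of which all these measures carry mass
at most `η`. Cover `K` by finitely many disjoint cells `Qᵢ` of radius `η` whose boundaries are
`μ`-null, so that `μₙ(Qᵢ) → μ(Qᵢ)` by the portmanteau theorem. Keep on each cell the mass
`min (μₙ Qᵢ) (μ Qᵢ)` of both measures and couple the kept parts by a product measure on each
cell: no mass moves farther than `2η`, and the discarded mass on either side is at most
`η + ∑ᵢ |μₙ Qᵢ - μ Qᵢ|`. Hence `W^{a,b}_p(μₙ, μ) ≤ (4a + 2b|μ|^{1/p}) η` for large `n`.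
-/

open Function

namespace MeasureTheory.FiniteMeasure

variable {Ω ι : Type*} [MeasurableSpace Ω] [TopologicalSpace Ω] [OpensMeasurableSpace Ω]
  [HasOuterApproxClosed Ω]

theorem tendsto_measure_of_null_frontier_of_tendsto {L : Filter ι} {μ : FiniteMeasure Ω}
    {μs : ι → FiniteMeasure Ω} (hμs : Tendsto μs L (𝓝 μ)) {E : Set Ω}
    (hE : μ (frontier E) = 0) :
    Tendsto (fun i ↦ μs i E) L (𝓝 (μ E)) := by
  rcases eq_or_ne μ 0 with rfl | hμ
  · have hmass : Tendsto (fun i ↦ (μs i).mass) L (𝓝 0) := hμs.mass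
    exact tendsto_of_tendsto_of_tendsto_of_le_of_le tendsto_const_nhds hmass
      (fun _ ↦ zero_le) (fun i ↦ apply_le_mass _ _)
  · obtain ⟨x, -⟩ := nonempty_of_measure_ne_zero (μ := (μ : Measure Ω)) (s := Set.univ)
      (by rwa [← ennreal_mass, ENNReal.coe_ne_zero, mass_nonzero_iff])
    have : Nonempty Ω := ⟨x⟩
    have hnormalize := ProbabilityMeasure.tendsto_measure_of_null_frontier_of_tendsto
      (tendsto_normalize_of_tendsto hμs hμ) (E := E)
      (by rw [μ.normalize_eq_of_nonzero hμ, hE, mul_zero])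
    simp_rw [self_eq_mass_mul_normalize _ E]
    exact hμs.mass.mul hnormalize

end MeasureTheory.FiniteMeasure

theorem WeakConv.tendsto_measureReal_of_null_frontier {Ω : Type*} [MeasurableSpace Ω]
    [TopologicalSpace Ω] [OpensMeasurableSpace Ω] [HasOuterApproxClosed Ω]
    {μs : ℕ → Measure Ω} {μ : Measure Ω} [∀ n, IsFiniteMeasure (μs n)] [IsFiniteMeasure μ]
    (h : WeakConv μs μ) {E : Set Ω} (hE : μ (frontier E) = 0) :
    Tendsto (fun n ↦ (μs n).real E) atTop (𝓝 (μ.real E)) := by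
  let P : ℕ → FiniteMeasure Ω := fun n ↦ ⟨μs n, inferInstance⟩
  let P₀ : FiniteMeasure Ω := ⟨μ, inferInstance⟩
  have hfinite : Tendsto P atTop (𝓝 P₀) :=
    FiniteMeasure.tendsto_of_forall_integral_tendsto fun f ↦
      h f f.continuous ⟨‖f‖, f.norm_coe_le_norm⟩
  exact (NNReal.continuous_coe.tendsto _).comp
    (FiniteMeasure.tendsto_measure_of_null_frontier_of_tendsto hfinite
      (show (μ (frontier E)).toNNReal = 0 by simp [hE]))

theorem Tight.isTightMeasureSet {E : Type*} [NormedAddCommGroup E] [MeasurableSpace E]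
    {S : Set (Measure E)} (h : Tight S) : IsTightMeasureSet S := by
  rw [isTightMeasureSet_iff_exists_isCompact_measure_compl_le]
  intro ε hε
  obtain ⟨K, hK, hKS⟩ := h (min ε 1).toReal (ENNReal.toReal_pos (by simp [hε.ne']) (by simp))
  refine ⟨K, hK, fun μ hμ ↦ ((hKS μ hμ).trans_eq ?_).le.trans (min_le_left ε 1)⟩
  exact ENNReal.ofReal_toReal (by simp)

theorem IsCompact.exists_null_frontier_partition {Ω : Type*} [PseudoMetricSpace Ω]
    [MeasurableSpace Ω] [OpensMeasurableSpace Ω] (μ : Measure Ω) [IsFiniteMeasure μ]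
    {K : Set Ω} (hK : IsCompact K) {δ : ℝ} (hδ : 0 < δ) :
    ∃ (N : ℕ) (c : Fin N → Ω) (Q : Fin N → Set Ω), (∀ i, MeasurableSet (Q i)) ∧
      Pairwise (Disjoint on Q) ∧ (∀ i, μ (frontier (Q i)) = 0) ∧
      (∀ i, Q i ⊆ Metric.closedBall (c i) δ) ∧ K ⊆ ⋃ i, Q i := by
  have hradius (x : Ω) : ∃ r ∈ Set.Ioo (δ / 2) δ, μ (frontier (Metric.ball x r)) = 0 := by
    simpa only [Metric.thickening_singleton] using
      exists_null_frontier_thickening μ {x} (half_lt_self hδ)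
  choose r hr hr_null using hradius
  obtain ⟨t, -, hKt⟩ := hK.elim_nhds_subcover (fun x ↦ Metric.ball x (r x))
    fun x _ ↦ Metric.ball_mem_nhds x ((half_pos hδ).trans (hr x).1)
  let c : Fin t.card → Ω := fun i ↦ t.equivFin.symm i
  let B : Fin t.card → Set Ω := fun i ↦ Metric.ball (c i) (r (c i))
  refine ⟨t.card, c, disjointed B, fun i ↦ ?_, disjoint_disjointed B, fun i ↦ ?_, fun i ↦ ?_, ?_⟩
  · exact disjointedRec (fun s j hs ↦ hs.diff measurableSet_ball) measurableSet_ball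
  · refine disjointedRec (p := fun s ↦ μ (frontier s) = 0) (fun s j hs ↦ ?_) (hr_null _)
    refine measure_mono_null ?_ (measure_union_null hs (hr_null (c j)))
    rw [Set.sdiff_eq]
    refine (frontier_inter_subset _ _).trans ?_
    rw [frontier_compl]
    exact Set.union_subset_union Set.inter_subset_left Set.inter_subset_right
  · exact (disjointed_le B i).trans
      (Metric.ball_subset_ball (hr _).2.le |>.trans Metric.ball_subset_closedBall)
  · rw [iUnion_disjointed]
    refine hKt.trans (Set.iUnion₂_subset fun x hx ↦ ?_)
    have hx' : c (t.equivFin ⟨x, hx⟩) = x := by simp [c]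
    exact (Set.subset_iUnion B (t.equivFin ⟨x, hx⟩)).trans' (by simp only [B, hx', subset_rfl])

section GeneralizedWasserstein

variable {E : Type*} [MeasurableSpace E]

theorem tvDist_eq_of_le {μ ν : Measure E} [IsFiniteMeasure μ] (h : ν ≤ μ) :
    tvDist μ ν = mass μ - mass ν := by
  have := isFiniteMeasure_of_le μ h
  rw [tvDist, Measure.sub_eq_zero_of_le h, Measure.sub_apply MeasurableSet.univ h,
    Measure.coe_zero, Pi.zero_apply, add_zero,
    ENNReal.toReal_sub_of_le (h _) (measure_ne_top μ _), mass, mass]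

variable [NormedAddCommGroup E]

theorem FinMom.mono {p : ℝ} {μ ν : Measure E} (hμ : FinMom p μ) (h : ν ≤ μ) : FinMom p ν :=
  (lintegral_mono' h le_rfl).trans_lt hμ

theorem finMom_restrict_of_isBounded {p : ℝ} (hp : 0 ≤ p) (μ : Measure E) [IsFiniteMeasure μ]
    {S : Set E} (hSm : MeasurableSet S) (hS : Bornology.IsBounded S) :
    FinMom p (μ.restrict S) := by
  obtain ⟨R, hR⟩ := hS.subset_closedBall 0
  refine (setLIntegral_mono' hSm fun x hx ↦ ENNReal.ofReal_le_ofReal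
    (Real.rpow_le_rpow (norm_nonneg x) (mem_closedBall_zero_iff.1 (hR hx)) hp)).trans_lt ?_
  rw [setLIntegral_const]
  exact ENNReal.mul_lt_top ENNReal.ofReal_lt_top (measure_lt_top μ S)

theorem Wcost_le_of_ae_dist_le {p D : ℝ} (hp : 0 ≤ p) {π : Measure (E × E)}
    (h : ∀ᵐ z ∂π, dist z.1 z.2 ≤ D) :
    Wcost p π ≤ ENNReal.ofReal (D ^ p) * π Set.univ := by
  rw [Wcost, ← lintegral_const]
  exact lintegral_mono_ae <| h.mono fun z hz ↦
    ENNReal.ofReal_le_ofReal (Real.rpow_le_rpow dist_nonneg hz hp)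

theorem Wp_le_of_isPlan {p D : ℝ} (hp : 0 < p) (hD : 0 ≤ D) {μ ν : Measure E}
    [IsFiniteMeasure μ] {π : Measure (E × E)} (hπ : IsPlan π μ ν)
    (h : ∀ᵐ z ∂π, dist z.1 z.2 ≤ D) :
    Wp p μ ν ≤ D * mass μ ^ (1 / p) := by
  have hπ_univ : π Set.univ = μ Set.univ := by
    rw [← hπ.1, Measure.map_apply measurable_fst MeasurableSet.univ, Set.preimage_univ]
  have hbound : sInf (Wcost p '' {π | IsPlan π μ ν}) ≤ ENNReal.ofReal (D ^ p) * μ Set.univ :=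
    (sInf_le (Set.mem_image_of_mem (Wcost p) (show π ∈ {π | IsPlan π μ ν} from hπ))).trans
      ((Wcost_le_of_ae_dist_le hp.le h).trans_eq (by rw [hπ_univ]))
  calc Wp p μ ν ≤ ((ENNReal.ofReal (D ^ p) * μ Set.univ) ^ (1 / p)).toReal :=
        ENNReal.toReal_mono (ENNReal.rpow_ne_top_of_nonneg (by positivity)
          (ENNReal.mul_ne_top ENNReal.ofReal_ne_top (measure_ne_top μ _)))
          (ENNReal.rpow_le_rpow hbound (by positivity))
    _ = D * mass μ ^ (1 / p) := by
      rw [ENNReal.mul_rpow_of_nonneg _ _ (by positivity), ENNReal.toReal_mul,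
        ← ENNReal.toReal_rpow, ← ENNReal.toReal_rpow, ENNReal.toReal_ofReal (by positivity),
        ← Real.rpow_mul hD, mul_one_div_cancel hp.ne', Real.rpow_one, mass]

variable {a b p : ℝ}

theorem nonneg_of_mem_gwSet (ha : 0 ≤ a) (hb : 0 ≤ b) {μ ν : Measure E} {r : ℝ}
    (hr : r ∈ gwSet a b p μ ν) : 0 ≤ r := by
  obtain ⟨μ', ν', -, -, -, -, -, rfl⟩ := hr
  have := ENNReal.toReal_nonneg (a := ((μ - μ') Set.univ + (μ' - μ) Set.univ))
  have := ENNReal.toReal_nonneg (a := ((ν - ν') Set.univ + (ν' - ν) Set.univ))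
  have : 0 ≤ Wp p μ' ν' := ENNReal.toReal_nonneg
  unfold tvDist
  positivity

theorem GW_nonneg (ha : 0 ≤ a) (hb : 0 ≤ b) (μ ν : Measure E) : 0 ≤ GW a b p μ ν :=
  Real.sInf_nonneg fun _ ↦ nonneg_of_mem_gwSet ha hb

theorem GW_le (ha : 0 ≤ a) (hb : 0 ≤ b) {μ ν μ' ν' : Measure E} [IsFiniteMeasure μ']
    [IsFiniteMeasure ν'] (hμ' : FinMom p μ') (hν' : FinMom p ν')
    (hmass : μ' Set.univ = ν' Set.univ) :
    GW a b p μ ν ≤ a * tvDist μ μ' + a * tvDist ν ν' + b * Wp p μ' ν' :=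
  csInf_le (⟨0, fun _ ↦ nonneg_of_mem_gwSet ha hb⟩ : BddBelow (gwSet a b p μ ν))
    (by unfold gwSet; exact ⟨μ', ν', ‹_›, ‹_›, hμ', hν', hmass, rfl⟩)

end GeneralizedWasserstein

theorem ENNReal.div_mul_cancel_of_le {x y : ℝ≥0∞} (h : x ≤ y) (hy : y ≠ ⊤) : x / y * y = x :=
  ENNReal.div_mul_cancel' (fun hy0 ↦ le_antisymm (hy0 ▸ h) zero_le) (absurd · hy)

section CellCoupling

variable {E ι : Type*} [MeasurableSpace E] [Fintype ι]

noncomputable def cellMatched (X Y : Measure E) (Q : ι → Set E) : Measure E :=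
  ∑ i, (min (X (Q i)) (Y (Q i)) / X (Q i)) • X.restrict (Q i)

noncomputable def cellCoupling (X Y : Measure E) [SFinite Y] (Q : ι → Set E) :
    Measure (E × E) :=
  ∑ i, (min (X (Q i)) (Y (Q i)) / X (Q i) / Y (Q i)) •
    (X.restrict (Q i)).prod (Y.restrict (Q i))

variable (X Y : Measure E) {Q : ι → Set E}

theorem cellMatched_apply_univ [IsFiniteMeasure X] :
    cellMatched X Y Q Set.univ = ∑ i, min (X (Q i)) (Y (Q i)) := by
  simp only [cellMatched, Measure.coe_finsetSum, Finset.sum_apply, Measure.smul_apply,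
    Measure.restrict_apply_univ, smul_eq_mul]
  exact Finset.sum_congr rfl fun i _ ↦
    ENNReal.div_mul_cancel_of_le (min_le_left _ _) (measure_ne_top X _)

theorem cellMatched_le_restrict (hQm : ∀ i, MeasurableSet (Q i))
    (hQd : Pairwise (Disjoint on Q)) :
    cellMatched X Y Q ≤ X.restrict (⋃ i, Q i) := by
  rw [Measure.restrict_iUnion hQd hQm, Measure.sum_fintype]
  refine Finset.sum_le_sum fun i _ ↦ Measure.le_iff'.2 fun s ↦ ?_
  rw [Measure.smul_apply, smul_eq_mul]
  exact mul_le_of_le_one_left' (ENNReal.div_le_of_le_mul (by rw [one_mul]; exact min_le_left _ _))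

theorem cellMatched_le (hQm : ∀ i, MeasurableSet (Q i)) (hQd : Pairwise (Disjoint on Q)) :
    cellMatched X Y Q ≤ X :=
  (cellMatched_le_restrict X Y hQm hQd).trans Measure.restrict_le_self

theorem cellCoupling_map_fst [IsFiniteMeasure Y] :
    (cellCoupling X Y Q).map Prod.fst = cellMatched X Y Q := by
  rw [cellCoupling, Measure.map_finset_sum' measurable_fst.aemeasurable]
  refine Finset.sum_congr rfl fun i _ ↦ ?_
  rw [Measure.map_smul, Measure.map_fst_prod, Measure.restrict_apply_univ, smul_smul,
    ENNReal.div_mul_cancel' (fun hY ↦ by simp [hY]) (absurd · (measure_ne_top Y _))]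

theorem cellCoupling_map_snd [IsFiniteMeasure X] [SFinite Y] :
    (cellCoupling X Y Q).map Prod.snd = cellMatched Y X Q := by
  rw [cellCoupling, Measure.map_finset_sum' measurable_snd.aemeasurable]
  refine Finset.sum_congr rfl fun i _ ↦ ?_
  rw [Measure.map_smul, Measure.map_snd_prod, Measure.restrict_apply_univ, smul_smul,
    div_eq_mul_inv (_ / X (Q i)), mul_right_comm, ← div_eq_mul_inv,
    ENNReal.div_mul_cancel_of_le (min_le_left _ _) (measure_ne_top X _), min_comm]

theorem isPlan_cellCoupling [IsFiniteMeasure X] [IsFiniteMeasure Y] :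
    IsPlan (cellCoupling X Y Q) (cellMatched X Y Q) (cellMatched Y X Q) :=
  ⟨cellCoupling_map_fst X Y, cellCoupling_map_snd X Y⟩

theorem tvDist_cellMatched_le [IsFiniteMeasure X] [IsFiniteMeasure Y]
    (hQm : ∀ i, MeasurableSet (Q i)) (hQd : Pairwise (Disjoint on Q)) :
    tvDist X (cellMatched X Y Q) ≤ X.real (⋃ i, Q i)ᶜ + ∑ i, |X.real (Q i) - Y.real (Q i)| := by
  have hX : mass X = X.real (⋃ i, Q i)ᶜ + ∑ i, X.real (Q i) := by
    rw [← measureReal_iUnion_fintype hQd hQm, add_comm,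
      measureReal_add_measureReal_compl (MeasurableSet.iUnion hQm), mass, measureReal_def]
  have hT : mass (cellMatched X Y Q) = ∑ i, min (X.real (Q i)) (Y.real (Q i)) := by
    rw [mass, cellMatched_apply_univ, ENNReal.toReal_sum fun i _ ↦
      (min_le_left _ _).trans_lt (measure_lt_top X _) |>.ne]
    exact Finset.sum_congr rfl fun i _ ↦
      ENNReal.toReal_min (measure_ne_top X _) (measure_ne_top Y _)
  rw [tvDist_eq_of_le (cellMatched_le X Y hQm hQd), hX, hT, add_sub_assoc,
    ← Finset.sum_sub_distrib]
  gcongr with i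
  exact (sub_le_sub_right (le_max_left _ _) _).trans_eq (max_sub_min_eq_abs' _ _)

theorem cellCoupling_ae_dist_le [PseudoMetricSpace E] [SFinite X] [SFinite Y]
    (hQm : ∀ i, MeasurableSet (Q i)) {c : ι → E} {δ : ℝ}
    (hQ : ∀ i, Q i ⊆ Metric.closedBall (c i) δ) :
    ∀ᵐ z ∂cellCoupling X Y Q, dist z.1 z.2 ≤ 2 * δ := by
  rw [cellCoupling, ae_finsetSum_measure_iff]
  refine fun i _ ↦ Measure.ae_smul_measure ?_ _
  rw [Measure.prod_restrict]
  filter_upwards [ae_restrict_mem ((hQm i).prod (hQm i))] with z hz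
  linarith [dist_triangle_right z.1 z.2 (c i), Metric.mem_closedBall.1 (hQ i hz.1),
    Metric.mem_closedBall.1 (hQ i hz.2)]

end CellCoupling

section CellEstimate

variable {E ι : Type*} [NormedAddCommGroup E] [MeasurableSpace E] [Fintype ι]
  (X Y : Measure E) [IsFiniteMeasure X] {Q : ι → Set E}

theorem finMom_cellMatched {p : ℝ} (hp : 0 ≤ p) (hQm : ∀ i, MeasurableSet (Q i))
    (hQd : Pairwise (Disjoint on Q)) (hQb : ∀ i, Bornology.IsBounded (Q i)) :
    FinMom p (cellMatched X Y Q) :=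
  (finMom_restrict_of_isBounded hp X (.iUnion hQm) (Bornology.isBounded_iUnion.2 hQb)).mono
    (cellMatched_le_restrict X Y hQm hQd)

theorem GW_le_of_cells {a b p : ℝ} (ha : 0 ≤ a) (hb : 0 ≤ b) (hp : 0 < p) [IsFiniteMeasure Y]
    (hQm : ∀ i, MeasurableSet (Q i)) (hQd : Pairwise (Disjoint on Q)) {c : ι → E} {δ : ℝ}
    (hδ : 0 ≤ δ) (hQ : ∀ i, Q i ⊆ Metric.closedBall (c i) δ) :
    GW a b p X Y ≤ a * (X.real (⋃ i, Q i)ᶜ + ∑ i, |X.real (Q i) - Y.real (Q i)|)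
      + a * (Y.real (⋃ i, Q i)ᶜ + ∑ i, |X.real (Q i) - Y.real (Q i)|)
      + b * (2 * δ * mass Y ^ (1 / p)) := by
  have := isFiniteMeasure_of_le X (cellMatched_le X Y hQm hQd)
  have := isFiniteMeasure_of_le Y (cellMatched_le Y X hQm hQd)
  have hQb i : Bornology.IsBounded (Q i) := Metric.isBounded_closedBall.subset (hQ i)
  have hmass : cellMatched X Y Q Set.univ = cellMatched Y X Q Set.univ := by
    simp_rw [cellMatched_apply_univ, min_comm]
  have hW : Wp p (cellMatched X Y Q) (cellMatched Y X Q) ≤ 2 * δ * mass Y ^ (1 / p) := by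
    refine (Wp_le_of_isPlan hp (by positivity) (isPlan_cellCoupling X Y)
      (cellCoupling_ae_dist_le X Y hQm hQ)).trans ?_
    have hle : mass (cellMatched X Y Q) ≤ mass Y := by
      rw [mass, hmass]
      exact ENNReal.toReal_mono (measure_ne_top Y _) (cellMatched_le Y X hQm hQd _)
    gcongr
    exact ENNReal.toReal_nonneg
  calc GW a b p X Y ≤ a * tvDist X (cellMatched X Y Q) + a * tvDist Y (cellMatched Y X Q)
        + b * Wp p (cellMatched X Y Q) (cellMatched Y X Q) :=
      GW_le ha hb (finMom_cellMatched X Y hp.le hQm hQd hQb)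
        (finMom_cellMatched Y X hp.le hQm hQd hQb) hmass
    _ ≤ _ := by
      gcongr
      · exact tvDist_cellMatched_le X Y hQm hQd
      · simpa only [abs_sub_comm] using tvDist_cellMatched_le Y X hQm hQd

end CellEstimate

theorem WeakConv.eventually_GW_le {E : Type*} [NormedAddCommGroup E] [MeasurableSpace E]
    [OpensMeasurableSpace E] {a b p : ℝ} (ha : 0 ≤ a) (hb : 0 ≤ b) (hp : 0 < p)
    {μs : ℕ → Measure E} {μ : Measure E} [∀ n, IsFiniteMeasure (μs n)] [IsFiniteMeasure μ]
    (hconv : WeakConv μs μ) {K : Set E} (hK : IsCompact K) {η : ℝ} (hη : 0 < η)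
    (hKs : ∀ n, μs n Kᶜ ≤ ENNReal.ofReal η) (hKμ : μ Kᶜ ≤ ENNReal.ofReal η) :
    ∀ᶠ n in atTop, GW a b p (μs n) μ ≤ (4 * a + 2 * b * mass μ ^ (1 / p)) * η := by
  obtain ⟨N, c, Q, hQm, hQd, hQf, hQb, hKQ⟩ := hK.exists_null_frontier_partition μ hη
  have hcells : Tendsto (fun n ↦ ∑ i, |(μs n).real (Q i) - μ.real (Q i)|) atTop (𝓝 0) := by
    simpa using tendsto_finsetSum Finset.univ fun i _ ↦
      ((hconv.tendsto_measureReal_of_null_frontier (hQf i)).sub_const (μ.real (Q i))).abs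
  have hout (ν : Measure E) [IsFiniteMeasure ν] (hν : ν Kᶜ ≤ ENNReal.ofReal η) :
      ν.real (⋃ i, Q i)ᶜ ≤ η :=
    ENNReal.toReal_le_of_le_ofReal hη.le
      ((measure_mono (Set.compl_subset_compl.2 hKQ)).trans hν)
  filter_upwards [hcells.eventually (ge_mem_nhds hη)] with n hn
  calc GW a b p (μs n) μ ≤ _ := GW_le_of_cells (μs n) μ ha hb hp hQm hQd hη.le hQb
    _ ≤ a * (η + η) + a * (η + η) + b * (2 * η * mass μ ^ (1 / p)) := by
      gcongr
      exacts [hout _ (hKs n), hout _ hKμ]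
    _ = _ := by ring

theorem gw_tendsto_zero_of_weakConv_tight_general {d : ℕ} (a b p : ℝ) (hp : 1 ≤ p) (ha : 0 < a) (hb : 0 < b)
    (μs : ℕ → Measure (Euc d)) (μ : Measure (Euc d))
    (hfin : ∀ n, IsFiniteMeasure (μs n)) [IsFiniteMeasure μ]
    (hconv : WeakConv μs μ) (htight : Tight (Set.range μs)) :
    Tendsto (fun n => GW a b p (μs n) μ) atTop (𝓝 0) := by
  set C := 4 * a + 2 * b * mass μ ^ (1 / p)
  have hC : 0 ≤ C := by
    have : 0 ≤ mass μ := ENNReal.toReal_nonneg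
    positivity
  have hbound (η : ℝ) (hη : 0 < η) : ∀ᶠ n in atTop, GW a b p (μs n) μ ≤ C * η := by
    obtain ⟨K, hK, hKT⟩ := isTightMeasureSet_iff_exists_isCompact_measure_compl_le.1
      (htight.isTightMeasureSet.union (isTightMeasureSet_singleton (μ := μ))) (.ofReal η)
      (by positivity)
    exact hconv.eventually_GW_le ha.le hb.le (by linarith) hK hη
      (fun n ↦ hKT _ (.inl ⟨n, rfl⟩)) (hKT μ (.inr rfl))
  refine tendsto_order.2 ⟨fun x hx ↦ .of_forall fun n ↦ hx.trans_le (GW_nonneg ha.le hb.le _ _),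
    fun ε hε ↦ ?_⟩
  filter_upwards [hbound (ε / (C + 1)) (by positivity)] with n hn
  refine hn.trans_lt ?_
  rw [← mul_div_assoc, div_lt_iff₀ (by positivity)]
  linarith

theorem gw_tendsto_zero_of_weakConv_tight {d : ℕ} (hd : 1 ≤ d) (a b p : ℝ) (hp : 1 ≤ p) (ha : 0 < a) (hb : 0 < b)
    (μs : ℕ → Measure (Euc d)) (μ : Measure (Euc d))
    (hfin : ∀ n, IsFiniteMeasure (μs n)) [IsFiniteMeasure μ]
    (hconv : WeakConv μs μ) (htight : Tight (Set.range μs)) :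
    Tendsto (fun n => GW a b p (μs n) μ) atTop (𝓝 0) :=
  gw_tendsto_zero_of_weakConv_tight_general a b p hp ha hb μs μ hfin hconv htight
end

section
/- Let μ_n be a sequence in M and μ ∈ M. If W^{a,b}_p(μ_n, μ) → 0, then the family {μ_n} is tight and μ_n converges weakly to μ (i.e. ∫ f dμ_n → ∫ f dμ for every bounded continuous f : ℝ^d → ℝ). -/
open MeasureTheory ENNReal Filter Topology

/-!
A near-optimal competitor for `W^{a,b}_p(μₙ, μ)` changes `μₙ` and `μ` by little in total
variation and couples the modified measures by a plan of small `p`-cost; by Markov's inequality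
that plan moves little mass over any fixed distance `δ`. This alone transports the tail bounds of
`μ` to uniform tail bounds for the `μₙ` (tightness), and, for a bounded continuous `f` that is
uniformly continuous near a compact set carrying most of `μ`, it makes `∫ f dμₙ` close to
`∫ f dμ`.
-/

open Set

lemma MeasureTheory.Measure.add_sub_eq_add_sub {α : Type*} [MeasurableSpace α] (μ ν : Measure α)
    [IsFiniteMeasure μ] [IsFiniteMeasure ν] : μ + (ν - μ) = ν + (μ - ν) := by
  obtain ⟨s, hs⟩ := exists_isHahnDecomposition μ ν
  rw [← restrict_add_restrict_compl (μ := μ + (ν - μ)) hs.measurableSet,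
    ← restrict_add_restrict_compl (μ := ν + (μ - ν)) hs.measurableSet]
  simp only [Measure.restrict_add, Measure.restrict_sub_eq_restrict_sub_restrict hs.measurableSet,
    Measure.restrict_sub_eq_restrict_sub_restrict hs.measurableSet.compl,
    Measure.sub_eq_zero_of_le hs.le_on, Measure.sub_eq_zero_of_le hs.ge_on_compl, add_zero]
  rw [add_comm (μ.restrict s), Measure.sub_add_cancel_of_le hs.le_on, add_comm (ν.restrict sᶜ),
    Measure.sub_add_cancel_of_le hs.ge_on_compl]

section TotalVariation

variable {α : Type*} [MeasurableSpace α] (μ ν : Measure α)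

lemma tvDist_comm : tvDist μ ν = tvDist ν μ := by
  rw [tvDist, tvDist, add_comm]

variable [IsFiniteMeasure μ] [IsFiniteMeasure ν]

lemma tvDist_eq_add : tvDist μ ν = (μ - ν).real univ + (ν - μ).real univ :=
  ENNReal.toReal_add (measure_ne_top _ _) (measure_ne_top _ _)

lemma measure_le_add_tvDist (s : Set α) : μ s ≤ ν s + ENNReal.ofReal (tvDist μ ν) :=
  calc μ s ≤ (μ - ν + ν) s := Measure.sub_le_iff_le_add.1 le_rfl s
    _ = ν s + (μ - ν) s := add_comm _ _
    _ ≤ ν s + ((μ - ν) univ + (ν - μ) univ) := by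
      gcongr
      exact (measure_mono (subset_univ s)).trans le_self_add
    _ = ν s + ENNReal.ofReal (tvDist μ ν) := by
      rw [tvDist, ENNReal.ofReal_toReal (by finiteness)]

lemma measureReal_le_add_tvDist (s : Set α) : μ.real s ≤ ν.real s + tvDist μ ν := by
  have h := ENNReal.toReal_mono (by finiteness) (measure_le_add_tvDist μ ν s)
  rwa [ENNReal.toReal_add (measure_ne_top _ _) ENNReal.ofReal_ne_top,
    ENNReal.toReal_ofReal (by rw [tvDist]; positivity)] at h

lemma abs_integral_sub_le_mul_tvDist {f : α → ℝ} (hf : Measurable f) {C : ℝ}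
    (hC : ∀ x, |f x| ≤ C) : |∫ x, f x ∂μ - ∫ x, f x ∂ν| ≤ C * tvDist μ ν := by
  have hint : ∀ ρ : Measure α, IsFiniteMeasure ρ → Integrable f ρ := fun ρ _ =>
    .of_bound hf.aestronglyMeasurable C (.of_forall hC)
  have hbound : ∀ ρ : Measure α, IsFiniteMeasure ρ → |∫ x, f x ∂ρ| ≤ C * ρ.real univ := by
    intro ρ _
    simpa only [Real.norm_eq_abs] using norm_integral_le_of_norm_le_const (μ := ρ) (f := f)
      (.of_forall fun x => (Real.norm_eq_abs (f x)).trans_le (hC x))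
  have hsplit : ∫ x, f x ∂μ - ∫ x, f x ∂ν = ∫ x, f x ∂(μ - ν) - ∫ x, f x ∂(ν - μ) := by
    have h := congrArg (fun ρ => ∫ x, f x ∂ρ) (Measure.add_sub_eq_add_sub μ ν)
    simp only [integral_add_measure (hint _ inferInstance) (hint _ inferInstance)] at h
    linarith
  rw [hsplit, tvDist_eq_add, mul_add]
  exact (abs_sub _ _).trans (add_le_add (hbound _ inferInstance) (hbound _ inferInstance))

end TotalVariation

lemma memLp_ofReal_iff_lintegral_norm_rpow_lt_top {α E : Type*} [MeasurableSpace α]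
    [NormedAddCommGroup E] {μ : Measure α} {f : α → E} (hf : AEStronglyMeasurable f μ) {p : ℝ}
    (hp : 0 < p) :
    MemLp f (ENNReal.ofReal p) μ ↔ ∫⁻ x, ENNReal.ofReal (‖f x‖ ^ p) ∂μ < ⊤ := by
  rw [MemLp, eLpNorm_lt_top_iff_lintegral_rpow_enorm_lt_top (by simpa using hp) (by simp),
    ENNReal.toReal_ofReal hp.le, and_iff_right hf]
  simp only [← ofReal_norm, ENNReal.ofReal_rpow_of_nonneg (norm_nonneg _) hp.le]

lemma exists_isPlan {X : Type*} [MeasurableSpace X] {μ ν : Measure X} [IsFiniteMeasure μ]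
    (h : μ univ = ν univ) : ∃ π : Measure (X × X), IsPlan π μ ν := by
  rcases eq_or_ne (μ univ) 0 with h0 | h0
  · refine ⟨0, ?_, ?_⟩ <;> simp only [Measure.map_zero]
    · exact (Measure.measure_univ_eq_zero.1 h0).symm
    · exact (Measure.measure_univ_eq_zero.1 (h ▸ h0)).symm
  · have hν : IsFiniteMeasure ν := ⟨h ▸ measure_lt_top μ univ⟩
    refine ⟨(μ univ)⁻¹ • μ.prod ν, ?_, ?_⟩
    · rw [Measure.map_smul, Measure.map_fst_prod, ← h, smul_smul,
        ENNReal.inv_mul_cancel h0 (measure_ne_top _ _), one_smul]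
    · rw [Measure.map_smul, Measure.map_snd_prod, smul_smul,
        ENNReal.inv_mul_cancel h0 (measure_ne_top _ _), one_smul]

section Transport

variable {E : Type*} [NormedAddCommGroup E] [MeasurableSpace E] [BorelSpace E]
  [SecondCountableTopology E] {p : ℝ}

lemma finMom_iff_memLp (hp : 0 < p) (μ : Measure E) : FinMom p μ ↔ MemLp id (ENNReal.ofReal p) μ :=
  (memLp_ofReal_iff_lintegral_norm_rpow_lt_top aestronglyMeasurable_id hp).symm

lemma Wcost_lt_top_iff_memLp (hp : 0 < p) (π : Measure (E × E)) :
    Wcost p π < ⊤ ↔ MemLp (fun z : E × E => z.1 - z.2) (ENNReal.ofReal p) π := by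
  simp only [Wcost, dist_eq_norm]
  exact (memLp_ofReal_iff_lintegral_norm_rpow_lt_top (by fun_prop) hp).symm

lemma IsPlan.Wcost_lt_top {π : Measure (E × E)} {μ ν : Measure E} (hπ : IsPlan π μ ν)
    (hp : 0 < p) (hμ : FinMom p μ) (hν : FinMom p ν) : Wcost p π < ⊤ := by
  rw [finMom_iff_memLp hp, ← hπ.1] at hμ
  rw [finMom_iff_memLp hp, ← hπ.2] at hν
  exact (Wcost_lt_top_iff_memLp hp π).2
    ((hμ.comp_of_map measurable_fst.aemeasurable).sub (hν.comp_of_map measurable_snd.aemeasurable))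

lemma exists_isPlan_Wcost_lt (hp : 0 < p) {μ ν : Measure E} [IsFiniteMeasure μ]
    (hμ : FinMom p μ) (hν : FinMom p ν) (h : μ univ = ν univ) {w : ℝ} (hW : Wp p μ ν < w) :
    ∃ π : Measure (E × E), IsPlan π μ ν ∧ Wcost p π < ENNReal.ofReal (w ^ p) := by
  -- `Wp` is `0` when every plan has infinite cost, so a finite-cost plan is needed first.
  obtain ⟨π₀, hπ₀⟩ := exists_isPlan h
  set S := Wcost p '' {π | IsPlan π μ ν}
  have hS : sInf S < ⊤ :=
    (sInf_le (mem_image_of_mem (Wcost p) hπ₀)).trans_lt (hπ₀.Wcost_lt_top hp hμ hν)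
  have hw : 0 < w := ENNReal.toReal_nonneg.trans_lt hW
  have hroot : sInf S ^ (1 / p) < ENNReal.ofReal w := by
    rwa [Wp, ← ENNReal.lt_ofReal_iff_toReal_lt
      (ENNReal.rpow_lt_top_of_nonneg (by positivity) hS.ne).ne] at hW
  have hlt : sInf S < ENNReal.ofReal (w ^ p) := by
    simpa [← ENNReal.rpow_mul, hp.ne', ENNReal.ofReal_rpow_of_pos hw] using
      ENNReal.rpow_lt_rpow hroot hp
  obtain ⟨_, ⟨π, hπ, rfl⟩, hcost⟩ := sInf_lt_iff.1 hlt
  exact ⟨π, hπ, hcost⟩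

lemma measure_dist_ge_le_Wcost_div (hp : 0 < p) (π : Measure (E × E)) {δ : ℝ} (hδ : 0 < δ) :
    π {z | δ ≤ dist z.1 z.2} ≤ Wcost p π / ENNReal.ofReal (δ ^ p) := by
  calc π {z | δ ≤ dist z.1 z.2}
      ≤ π {z | ENNReal.ofReal (δ ^ p) ≤ ENNReal.ofReal (dist z.1 z.2 ^ p)} :=
        measure_mono fun z hz => ENNReal.ofReal_le_ofReal (Real.rpow_le_rpow hδ.le hz hp.le)
    _ ≤ Wcost p π / ENNReal.ofReal (δ ^ p) :=
        meas_ge_le_lintegral_div (Measurable.aemeasurable (by fun_prop))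
          (by simp only [ne_eq, ENNReal.ofReal_eq_zero, not_le]; positivity) ENNReal.ofReal_ne_top

end Transport

section Coupling

variable {E : Type*} [NormedAddCommGroup E] [MeasurableSpace E]

lemma exists_approx_of_GW_lt {a b p η w : ℝ} (ha : 0 < a) (hb : 0 < b) {μ ν : Measure E}
    (h : GW a b p μ ν < min (a * η) (b * w)) :
    ∃ μ' ν' : Measure E, IsFiniteMeasure μ' ∧ IsFiniteMeasure ν' ∧ FinMom p μ' ∧ FinMom p ν' ∧
      μ' univ = ν' univ ∧ tvDist μ μ' < η ∧ tvDist ν ν' < η ∧ Wp p μ' ν' < w := by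
  have hne : (gwSet a b p μ ν).Nonempty :=
    ⟨_, 0, 0, inferInstance, inferInstance, by simp [FinMom], by simp [FinMom], rfl, rfl⟩
  obtain ⟨_, ⟨μ', ν', hμ', hν', hmμ, hmν, hmass, rfl⟩, hlt⟩ := exists_lt_of_csInf_lt hne h
  have htv₁ : 0 ≤ tvDist μ μ' := ENNReal.toReal_nonneg
  have htv₂ : 0 ≤ tvDist ν ν' := ENNReal.toReal_nonneg
  have hW : 0 ≤ Wp p μ' ν' := ENNReal.toReal_nonneg
  refine ⟨μ', ν', hμ', hν', hmμ, hmν, hmass, ?_, ?_, ?_⟩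
  · refine lt_of_mul_lt_mul_left ?_ ha.le
    linarith [min_le_left (a * η) (b * w), mul_nonneg ha.le htv₂, mul_nonneg hb.le hW]
  · refine lt_of_mul_lt_mul_left ?_ ha.le
    linarith [min_le_left (a * η) (b * w), mul_nonneg ha.le htv₁, mul_nonneg hb.le hW]
  · refine lt_of_mul_lt_mul_left ?_ hb.le
    linarith [min_le_right (a * η) (b * w), mul_nonneg ha.le htv₁, mul_nonneg ha.le htv₂]

/-- `W^{a,b}_p`-closeness enters the proof only through this Lévy–Prokhorov-type property. -/
def NearlyCoupled (δ η : ℝ) (μ ν : Measure E) : Prop :=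
  ∃ (μ' ν' : Measure E) (π : Measure (E × E)), IsFiniteMeasure μ' ∧ IsFiniteMeasure ν' ∧
    IsPlan π μ' ν' ∧ tvDist μ μ' < η ∧ tvDist ν ν' < η ∧
    π {z | δ ≤ dist z.1 z.2} < ENNReal.ofReal η

variable [BorelSpace E] [SecondCountableTopology E]

lemma nearlyCoupled_of_GW_lt {a b p δ η : ℝ} (hp : 0 < p) (ha : 0 < a) (hb : 0 < b)
    (hδ : 0 < δ) (hη : 0 < η) {μ ν : Measure E}
    (h : GW a b p μ ν < min (a * η) (b * (δ * η ^ p⁻¹))) : NearlyCoupled δ η μ ν := by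
  obtain ⟨μ', ν', hμ', hν', hmμ, hmν, hmass, htv₁, htv₂, hW⟩ := exists_approx_of_GW_lt ha hb h
  obtain ⟨π, hπ, hcost⟩ := exists_isPlan_Wcost_lt hp hmμ hmν hmass hW
  refine ⟨μ', ν', π, hμ', hν', hπ, htv₁, htv₂, (measure_dist_ge_le_Wcost_div hp π hδ).trans_lt ?_⟩
  have hsplit : (δ * η ^ p⁻¹) ^ p = δ ^ p * η := by
    rw [Real.mul_rpow hδ.le (by positivity), Real.rpow_inv_rpow hη.le hp.ne']
  refine ENNReal.div_lt_of_lt_mul ?_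
  rwa [hsplit, ENNReal.ofReal_mul (by positivity), mul_comm] at hcost

lemma eventually_nearlyCoupled_of_tendsto_GW {a b p δ η : ℝ} (hp : 0 < p) (ha : 0 < a)
    (hb : 0 < b) (hδ : 0 < δ) (hη : 0 < η) {μs : ℕ → Measure E} {μ : Measure E}
    (hgw : Tendsto (fun n => GW a b p (μs n) μ) atTop (𝓝 0)) :
    ∀ᶠ n in atTop, NearlyCoupled δ η (μs n) μ :=
  (hgw.eventually_lt_const (by positivity)).mono fun _ hn =>
    nearlyCoupled_of_GW_lt hp ha hb hδ hη hn

end Coupling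

section Tightness

variable {E : Type*} [NormedAddCommGroup E] [MeasurableSpace E]

lemma tight_of_isTightMeasureSet {S : Set (Measure E)} (h : IsTightMeasureSet S) : Tight S := by
  intro ε hε
  obtain ⟨K, hK, hS⟩ := isTightMeasureSet_iff_exists_isCompact_measure_compl_le.1 h _
    (ENNReal.ofReal_pos.2 (half_pos hε))
  exact ⟨K, hK, fun μ hμ =>
    (hS μ hμ).trans_lt ((ENNReal.ofReal_lt_ofReal_iff hε).2 (half_lt_self hε))⟩

variable [BorelSpace E]

lemma NearlyCoupled.measure_norm_gt_le {δ η : ℝ} {μ ν : Measure E} [IsFiniteMeasure μ]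
    [IsFiniteMeasure ν] (h : NearlyCoupled δ η μ ν) (r : ℝ) :
    μ {x | r + δ < ‖x‖} ≤ ν {x | r < ‖x‖} + ENNReal.ofReal (3 * η) := by
  obtain ⟨μ', ν', π, hμ', hν', hπ, htv₁, htv₂, hfar⟩ := h
  have hmeas : ∀ s : ℝ, MeasurableSet {x : E | s < ‖x‖} := fun s =>
    measurableSet_lt measurable_const measurable_norm
  have hplan : μ' {x | r + δ < ‖x‖} ≤ ν' {x | r < ‖x‖} + π {z | δ ≤ dist z.1 z.2} := by
    rw [← hπ.1, ← hπ.2, Measure.map_apply measurable_fst (hmeas _),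
      Measure.map_apply measurable_snd (hmeas _)]
    refine (measure_mono fun z hz => ?_).trans
      (measure_union_le (Prod.snd ⁻¹' {x : E | r < ‖x‖}) {z : E × E | δ ≤ dist z.1 z.2})
    by_contra! hnear
    simp only [mem_union, mem_preimage, mem_ofPred_eq, not_or, not_lt, not_le] at hz hnear
    linarith [norm_sub_norm_le z.1 z.2, dist_eq_norm z.1 z.2]
  rw [tvDist_comm] at htv₂
  calc μ {x | r + δ < ‖x‖}
      ≤ μ' {x | r + δ < ‖x‖} + ENNReal.ofReal (tvDist μ μ') := measure_le_add_tvDist μ μ' _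
    _ ≤ (ν {x | r < ‖x‖} + ENNReal.ofReal (tvDist ν' ν) + π {z | δ ≤ dist z.1 z.2}) +
        ENNReal.ofReal η := by
      gcongr
      exact hplan.trans (add_le_add_left (measure_le_add_tvDist ν' ν _) _)
    _ ≤ ν {x | r < ‖x‖} + ENNReal.ofReal η + ENNReal.ofReal η + ENNReal.ofReal η := by
      gcongr
    _ = ν {x | r < ‖x‖} + ENNReal.ofReal (3 * η) := by
      have hη : 0 ≤ η := (ENNReal.ofReal_pos.1 (pos_of_gt hfar)).le
      rw [show 3 * η = η + η + η by ring, ENNReal.ofReal_add (by positivity) hη,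
        ENNReal.ofReal_add hη hη]
      ring

lemma isTightMeasureSet_range_of_eventually_nearlyCoupled [ProperSpace E] {μs : ℕ → Measure E}
    [∀ n, IsFiniteMeasure (μs n)] {μ : Measure E} [IsFiniteMeasure μ]
    (h : ∀ η, 0 < η → ∀ᶠ n in atTop, NearlyCoupled 1 η (μs n) μ) :
    IsTightMeasureSet (range μs) := by
  have hlimsup : ∀ r, limsup (fun n => μs n {x | r + 1 < ‖x‖}) atTop ≤ μ {x | r < ‖x‖} := by
    intro r
    refine ENNReal.le_of_forall_pos_le_add fun ε hε _ => ?_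
    have hη : ENNReal.ofReal (3 * (ε / 3 : ℝ)) = ε := by
      rw [mul_div_cancel₀ _ three_ne_zero, ENNReal.ofReal_coe_nnreal]
    rw [← hη]
    exact limsup_le_of_le (by isBoundedDefault) <|
      (h _ (by positivity)).mono fun n hn => hn.measure_norm_gt_le r
  have hμ : Tendsto (fun r : ℝ => μ {x | r < ‖x‖}) atTop (𝓝 0) := by
    simpa using tendsto_measure_norm_gt_of_isTightMeasureSet (isTightMeasureSet_singleton (μ := μ))
  refine isTightMeasureSet_range_of_tendsto_limsup_measure_norm_gt <|
    tendsto_of_tendsto_of_tendsto_of_le_of_le tendsto_const_nhds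
      (hμ.comp (tendsto_atTop_add_const_right _ (-1) tendsto_id)) (fun _ => zero_le) fun r => ?_
  simpa only [Function.comp_def, id, ← sub_eq_add_neg, sub_add_cancel] using hlimsup (r - 1)

end Tightness

lemma IsCompact.exists_pos_forall_dist_lt {X Y : Type*} [PseudoMetricSpace X]
    [PseudoMetricSpace Y] {K : Set X} (hK : IsCompact K) {f : X → Y} (hf : Continuous f) {ε : ℝ}
    (hε : 0 < ε) : ∃ δ > 0, ∀ x y, y ∈ K → dist x y < δ → dist (f x) (f y) < ε := by
  obtain ⟨δ, hδ, hsub⟩ := Metric.mem_uniformity_dist.1 <| hK.uniformContinuousAt_of_continuousAt f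
    (fun x _ => hf.continuousAt) (Metric.dist_mem_uniformity hε)
  refine ⟨δ, hδ, fun x y hy hxy => ?_⟩
  rw [dist_comm]
  exact hsub (by rwa [dist_comm]) hy

section WeakConvergence

variable {E : Type*} [NormedAddCommGroup E] [MeasurableSpace E] [BorelSpace E]
  [SecondCountableTopology E]

lemma IsPlan.abs_integral_sub_le {π : Measure (E × E)} [IsFiniteMeasure π] {μ ν : Measure E}
    (hπ : IsPlan π μ ν) {f : E → ℝ} (hf : Measurable f) {C : ℝ} (hC : ∀ x, |f x| ≤ C)
    {K : Set E} (hK : MeasurableSet K) {δ ε : ℝ} (hε : 0 ≤ ε)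
    (hfK : ∀ x y, y ∈ K → dist x y < δ → |f x - f y| ≤ ε) :
    |∫ x, f x ∂μ - ∫ x, f x ∂ν| ≤
      ε * π.real univ + 2 * C * (ν.real Kᶜ + π.real {z | δ ≤ dist z.1 z.2}) := by
  set B := Prod.snd ⁻¹' Kᶜ ∪ {z : E × E | δ ≤ dist z.1 z.2}
  have hB : MeasurableSet B :=
    (measurable_snd hK.compl).union (measurableSet_le measurable_const (by fun_prop))
  have hC0 : 0 ≤ C := (abs_nonneg _).trans (hC 0)
  have hint₁ : Integrable (fun z : E × E => f z.1) π :=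
    .of_bound (hf.comp measurable_fst).aestronglyMeasurable C
      (.of_forall fun z => (Real.norm_eq_abs _).trans_le (hC z.1))
  have hint₂ : Integrable (fun z : E × E => f z.2) π :=
    .of_bound (hf.comp measurable_snd).aestronglyMeasurable C
      (.of_forall fun z => (Real.norm_eq_abs _).trans_le (hC z.2))
  have hptw : ∀ z : E × E, |f z.1 - f z.2| ≤ ε + B.indicator (fun _ => 2 * C) z := by
    intro z
    by_cases hz : z ∈ B
    · rw [indicator_of_mem hz]
      linarith [abs_sub (f z.1) (f z.2), hC z.1, hC z.2]
    · simp only [B, mem_union, mem_preimage, mem_compl_iff, mem_ofPred_eq, not_or, not_not,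
        not_le] at hz
      rw [indicator_of_notMem (by simp [B, hz.1, hz.2]), add_zero]
      exact hfK _ _ hz.1 hz.2
  have hBreal : π.real B ≤ ν.real Kᶜ + π.real {z | δ ≤ dist z.1 z.2} := by
    refine (measureReal_union_le _ _).trans_eq ?_
    rw [← hπ.2, map_measureReal_apply measurable_snd hK.compl]
  have hmarg : ∫ x, f x ∂μ - ∫ x, f x ∂ν = ∫ z, (f z.1 - f z.2) ∂π := by
    rw [← hπ.1, ← hπ.2, integral_map measurable_fst.aemeasurable hf.aestronglyMeasurable,
      integral_map measurable_snd.aemeasurable hf.aestronglyMeasurable, integral_sub hint₁ hint₂]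
  calc |∫ x, f x ∂μ - ∫ x, f x ∂ν|
      ≤ ∫ z, |f z.1 - f z.2| ∂π := hmarg ▸ abs_integral_le_integral_abs
    _ ≤ ∫ z, (ε + B.indicator (fun _ => 2 * C) z) ∂π :=
      integral_mono (hint₁.sub hint₂).abs
        ((integrable_const ε).add ((integrable_const (2 * C)).indicator hB)) hptw
    _ = ε * π.real univ + 2 * C * π.real B := by
      rw [integral_add (integrable_const ε) ((integrable_const (2 * C)).indicator hB),
        integral_const, integral_indicator_const _ hB, smul_eq_mul, smul_eq_mul]
      ring
    _ ≤ ε * π.real univ + 2 * C * (ν.real Kᶜ + π.real {z | δ ≤ dist z.1 z.2}) := by gcongr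

lemma NearlyCoupled.abs_integral_sub_le {δ η : ℝ} {μ ν : Measure E} [IsFiniteMeasure μ]
    [IsFiniteMeasure ν] (h : NearlyCoupled δ η μ ν) {f : E → ℝ} (hf : Measurable f) {C : ℝ}
    (hC : ∀ x, |f x| ≤ C) {K : Set E} (hK : MeasurableSet K) {ε : ℝ} (hε : 0 ≤ ε)
    (hfK : ∀ x y, y ∈ K → dist x y < δ → |f x - f y| ≤ ε) :
    |∫ x, f x ∂μ - ∫ x, f x ∂ν| ≤ ε * (ν.real univ + η) + 2 * C * (ν.real Kᶜ + 3 * η) := by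
  obtain ⟨μ', ν', π, hμ', hν', hπ, htv₁, htv₂, hfar⟩ := h
  have hπuniv : π univ = ν' univ := by
    rw [← hπ.2, Measure.map_apply measurable_snd MeasurableSet.univ, preimage_univ]
  have : IsFiniteMeasure π := ⟨hπuniv ▸ measure_lt_top ν' univ⟩
  have hC0 : 0 ≤ C := (abs_nonneg _).trans (hC 0)
  have hη : 0 ≤ η := (ENNReal.ofReal_pos.1 (pos_of_gt hfar)).le
  rw [tvDist_comm] at htv₂
  have hfar' : π.real {z | δ ≤ dist z.1 z.2} ≤ η := ENNReal.toReal_le_of_le_ofReal hη hfar.le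
  have hmass : π.real univ ≤ ν.real univ + η := by
    rw [measureReal_def, hπuniv, ← measureReal_def]
    linarith [measureReal_le_add_tvDist ν' ν univ]
  have hK' : ν'.real Kᶜ ≤ ν.real Kᶜ + η := by linarith [measureReal_le_add_tvDist ν' ν Kᶜ]
  have h₁ := abs_integral_sub_le_mul_tvDist μ μ' hf hC
  have h₂ := hπ.abs_integral_sub_le hf hC hK hε hfK
  have h₃ := abs_integral_sub_le_mul_tvDist ν' ν hf hC
  calc |∫ x, f x ∂μ - ∫ x, f x ∂ν|
      ≤ |∫ x, f x ∂μ - ∫ x, f x ∂μ'| + |∫ x, f x ∂μ' - ∫ x, f x ∂ν'| +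
          |∫ x, f x ∂ν' - ∫ x, f x ∂ν| := by
        linarith [abs_sub_le (∫ x, f x ∂μ) (∫ x, f x ∂μ') (∫ x, f x ∂ν),
          abs_sub_le (∫ x, f x ∂μ') (∫ x, f x ∂ν') (∫ x, f x ∂ν)]
    _ ≤ C * η + (ε * (ν.real univ + η) + 2 * C * ((ν.real Kᶜ + η) + η)) + C * η := by
      gcongr
      · exact h₁.trans (by gcongr)
      · exact h₂.trans (by gcongr)
      · exact h₃.trans (by gcongr)
    _ = ε * (ν.real univ + η) + 2 * C * (ν.real Kᶜ + 3 * η) := by ring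

lemma weakConv_of_eventually_nearlyCoupled [ProperSpace E] {μs : ℕ → Measure E}
    [∀ n, IsFiniteMeasure (μs n)] {μ : Measure E} [IsFiniteMeasure μ]
    (h : ∀ δ η, 0 < δ → 0 < η → ∀ᶠ n in atTop, NearlyCoupled δ η (μs n) μ) :
    WeakConv μs μ := by
  rintro f hf ⟨C, hC⟩
  have hC0 : 0 ≤ C := (abs_nonneg _).trans (hC 0)
  refine Metric.tendsto_nhds.2 fun ε hε => ?_
  set η := ε / (16 * (C + 1))
  have hη : 0 < η := by positivity
  obtain ⟨K, hK, hKη⟩ := isTightMeasureSet_iff_exists_isCompact_measure_compl_le.1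
    (isTightMeasureSet_singleton (μ := μ)) _ (ENNReal.ofReal_pos.2 hη)
  have hKc : μ.real Kᶜ ≤ η := ENNReal.toReal_le_of_le_ofReal hη.le (hKη μ rfl)
  set ε₀ := ε / (4 * (μ.real univ + η))
  obtain ⟨δ, hδ, hfK⟩ := hK.exists_pos_forall_dist_lt hf (show 0 < ε₀ by positivity)
  filter_upwards [h δ η hδ hη] with n hn
  have hbound := hn.abs_integral_sub_le hf.measurable hC hK.measurableSet (by positivity)
    fun x y hy hxy => (Real.dist_eq _ _ ▸ hfK x y hy hxy).le
  have h₁ : ε₀ * (μ.real univ + η) = ε / 4 := by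
    simp only [ε₀]
    field_simp
  have h₂ : 2 * C * (μ.real Kᶜ + 3 * η) ≤ ε / 2 :=
    calc 2 * C * (μ.real Kᶜ + 3 * η) ≤ 2 * C * (4 * η) := by gcongr; linarith
      _ = ε / 2 * (C / (C + 1)) := by simp only [η]; field_simp; ring
      _ ≤ ε / 2 :=
        mul_le_of_le_one_right (by positivity) ((div_le_one (by positivity)).2 (by linarith))
  rw [Real.dist_eq]
  linarith

end WeakConvergence

theorem weakConv_tight_of_gw_tendsto_zero_general {d : ℕ} (a b p : ℝ) (hp : 1 ≤ p) (ha : 0 < a) (hb : 0 < b)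
    (μs : ℕ → Measure (Euc d)) (μ : Measure (Euc d))
    (hfin : ∀ n, IsFiniteMeasure (μs n)) [IsFiniteMeasure μ]
    (hgw : Tendsto (fun n => GW a b p (μs n) μ) atTop (𝓝 0)) :
    Tight (Set.range μs) ∧ WeakConv μs μ := by
  have hnear : ∀ δ η, 0 < δ → 0 < η → ∀ᶠ n in atTop, NearlyCoupled δ η (μs n) μ :=
    fun _ _ hδ hη => eventually_nearlyCoupled_of_tendsto_GW (by linarith) ha hb hδ hη hgw
  exact ⟨tight_of_isTightMeasureSet <|
      isTightMeasureSet_range_of_eventually_nearlyCoupled fun η hη => hnear 1 η one_pos hη,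
    weakConv_of_eventually_nearlyCoupled hnear⟩

theorem weakConv_tight_of_gw_tendsto_zero {d : ℕ} (hd : 1 ≤ d) (a b p : ℝ) (hp : 1 ≤ p) (ha : 0 < a) (hb : 0 < b)
    (μs : ℕ → Measure (Euc d)) (μ : Measure (Euc d))
    (hfin : ∀ n, IsFiniteMeasure (μs n)) [IsFiniteMeasure μ]
    (hgw : Tendsto (fun n => GW a b p (μs n) μ) atTop (𝓝 0)) :
    Tight (Set.range μs) ∧ WeakConv μs μ :=
  weakConv_tight_of_gw_tendsto_zero_general a b p hp ha hb μs μ hfin hgw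
end
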